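/- The functional uniform prior density for the exponential model exp(−θx) on x ∈ [0,10], p(θ) ∝ e^{−10θ} √((e^{20θ} − 200θ² − 20θ − 1)/θ³), is integrable on (0,∞); that is, ∫₀^∞ e^{−10θ} √((e^{20θ} − 200θ² − 20θ − 1)/θ³) dθ < ∞. -/

import Mathlib

/-!
With `x = 2Lθ` the numerator is the Taylor remainder `eˣ - 1 - x - x²/2 ≤ x³/6 · eˣ`, so the
integrand is bounded by the constant `√(4L³/3)`; dropping the polynomial part of the numerator
bounds it by `θ^(-3/2)`, which is integrable at infinity.
-/

open Real MeasureTheory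

open Finset Nat in
theorem Real.exp_sub_sum_range_le {x : ℝ} (hx : 0 ≤ x) (n : ℕ) :
    exp x - ∑ i ∈ range n, x ^ i / i ! ≤ x ^ n / n ! * exp x := by
  have hexp : HasSum (fun i => x ^ i / i !) (exp x) := by
    rw [Real.exp_eq_exp_ℝ]; exact NormedSpace.expSeries_div_hasSum_exp x
  refine hasSum_le (fun k => ?_) ((hasSum_nat_add_iff' n).mpr hexp) (hexp.mul_left _)
  have hfac : (n ! * k ! : ℝ) ≤ (k + n)! := by
    exact_mod_cast Nat.le_of_dvd (factorial_pos _)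
      (add_comm n k ▸ factorial_mul_factorial_dvd_factorial_add n k)
  calc x ^ (k + n) / (k + n)! ≤ x ^ (k + n) / (n ! * k !) :=
        div_le_div_of_nonneg_left (by positivity) (by positivity) hfac
    _ = x ^ n / n ! * (x ^ k / k !) := by ring

theorem Real.exp_sub_quadratic_le {x : ℝ} (hx : 0 ≤ x) :
    exp x - 1 - x - x ^ 2 / 2 ≤ x ^ 3 / 6 * exp x := by
  simpa [Finset.sum_range_succ, Nat.factorial, sub_sub] using exp_sub_sum_range_le hx 3

lemma Real.exp_neg_mul_sqrt_mul_exp_two_mul (t y : ℝ) :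
    exp (-t) * √(y * exp (2 * t)) = √y := by
  rw [sqrt_mul' y (exp_nonneg _), show 2 * t = t + t by ring, exp_add,
    sqrt_mul_self (exp_nonneg t), mul_left_comm, ← exp_add, neg_add_cancel, exp_zero, mul_one]

/-- The prior `g` for the model `exp (-θ x)` on `x ∈ [0, L]` (the paper takes `L = 10`). -/
noncomputable def expoPrior (L θ : ℝ) : ℝ :=
  exp (-L * θ) * √((exp (2 * L * θ) - 2 * L ^ 2 * θ ^ 2 - 2 * L * θ - 1) / θ ^ 3)

variable {L θ : ℝ}

lemma measurable_expoPrior : Measurable (expoPrior L) := by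
  unfold expoPrior; fun_prop

lemma expoPrior_le_sqrt_of_le {B : ℝ}
    (h : (exp (2 * L * θ) - 2 * L ^ 2 * θ ^ 2 - 2 * L * θ - 1) / θ ^ 3 ≤
      B * exp (2 * L * θ)) :
    expoPrior L θ ≤ √B := by
  calc expoPrior L θ ≤ exp (-(L * θ)) * √(B * exp (2 * (L * θ))) := by
        rw [expoPrior, neg_mul, ← mul_assoc]
        gcongr
    _ = √B := exp_neg_mul_sqrt_mul_exp_two_mul _ _

lemma expoPrior_le_sqrt (hL : 0 ≤ L) (hθ : 0 < θ) : expoPrior L θ ≤ √(4 * L ^ 3 / 3) := by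
  refine expoPrior_le_sqrt_of_le ?_
  have h := exp_sub_quadratic_le (x := 2 * L * θ) (by positivity)
  rw [div_le_iff₀ (by positivity)]
  linear_combination h

lemma expoPrior_le_rpow (hθ : 0 < θ) : expoPrior L θ ≤ θ ^ (-3 / 2 : ℝ) := by
  have hsqrt : √(θ ^ 3)⁻¹ = θ ^ (-3 / 2 : ℝ) := by
    rw [sqrt_eq_rpow, ← rpow_natCast, ← rpow_neg_one, ← rpow_mul hθ.le, ← rpow_mul hθ.le]
    norm_num
  refine hsqrt ▸ expoPrior_le_sqrt_of_le ?_
  rw [inv_mul_eq_div]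
  gcongr
  nlinarith [sq_nonneg (L * θ), sq_nonneg (L * θ + 1)]

lemma expoPrior_nonneg : 0 ≤ expoPrior L θ := by
  unfold expoPrior; positivity

theorem integrableOn_expoPrior (hL : 0 ≤ L) : IntegrableOn (expoPrior L) (Set.Ioi 0) := by
  have hmeas := measurable_expoPrior (L := L)
  have near_zero : IntegrableOn (expoPrior L) (Set.Ioc 0 1) := by
    refine Integrable.mono' (integrableOn_const (C := √(4 * L ^ 3 / 3)) (by simp))
      hmeas.aestronglyMeasurable.restrict ?_
    filter_upwards [ae_restrict_mem measurableSet_Ioc] with θ hθ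
    rw [norm_of_nonneg expoPrior_nonneg]
    exact expoPrior_le_sqrt hL hθ.1
  have near_top : IntegrableOn (expoPrior L) (Set.Ioi 1) := by
    refine Integrable.mono'
      (integrableOn_Ioi_rpow_of_lt (by norm_num : (-3 / 2 : ℝ) < -1) one_pos)
      hmeas.aestronglyMeasurable.restrict ?_
    filter_upwards [ae_restrict_mem measurableSet_Ioi] with θ hθ
    rw [norm_of_nonneg expoPrior_nonneg]
    exact expoPrior_le_rpow (one_pos.trans hθ)
  simpa only [Set.Ioc_union_Ioi_eq_Ioi zero_le_one] using near_zero.union near_top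

/-- The functional uniform prior density for the exponential model,
`g(θ) = e^{-10θ} √((e^{20θ} - 200θ² - 20θ - 1)/θ³)`, is integrable on `(0, ∞)`. -/
theorem expo_prior_integrable :
    IntegrableOn
      (fun θ : ℝ => Real.exp (-10 * θ) *
        Real.sqrt ((Real.exp (20 * θ) - 200 * θ ^ 2 - 20 * θ - 1) / θ ^ 3))
      (Set.Ioi (0:ℝ)) := by
  convert integrableOn_expoPrior (L := 10) (by norm_num) using 2 with θ
  norm_num [expoPrior]
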